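/- Large deviations estimate for the stopping time τ: for every ε > 0, limsup_{n→∞} n^{−1} log μ_n( |n^{−1} τ(ℓ) − 1/2| ≥ ε ) < 0; equivalently, there exist c > 0 and N such that μ_n(|n^{−1}τ(ℓ) − 1/2| ≥ ε) ≤ e^{−cn} for all n ≥ N. The same estimate holds for τ̃ in place of τ. -/

import Mathlib

open MeasureTheory Filter Finset

noncomputable section

/-- The i.i.d. product measure `μ^{⊗ n}` on `Fin n → ℝ`. -/
def pmeas (μ : MeasureTheory.Measure ℝ) (n : ℕ) : MeasureTheory.Measure (Fin n → ℝ) :=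
  MeasureTheory.Measure.pi fun _ => μ

/-- The minimal index (as a natural number) at which `ℓ` attains its maximum. -/
def maxIdx (n : ℕ) (ℓ : Fin n → ℝ) : ℕ :=
  sInf {i : ℕ | ∃ h : i < n, ∀ j : Fin n, ℓ j ≤ ℓ ⟨i, h⟩}

/-- The `i`-th coordinate of `ℓ` (`0`-based), with junk value `0` out of range. -/
def coord (n : ℕ) (ℓ : Fin n → ℝ) (i : ℕ) : ℝ :=
  if h : i < n then ℓ ⟨i, h⟩ else 0

/-- `a_p(ℓ)`: the number of short subsets of cardinality `p+1` containing the minimal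
index `i₀` of a maximal coordinate. -/
def aCount (n p : ℕ) (ℓ : Fin n → ℝ) : ℕ :=
  Nat.card {J : Finset (Fin n) //
    J.card = p + 1 ∧ (∃ i ∈ J, (i : ℕ) = maxIdx n ℓ) ∧
    ∑ j ∈ J, ℓ j < ∑ j ∈ Jᶜ, ℓ j}

/-- `ã_p(ℓ)`: the number of median subsets of cardinality `p+1` containing `i₀`. -/
def medCount (n p : ℕ) (ℓ : Fin n → ℝ) : ℕ :=
  Nat.card {J : Finset (Fin n) //
    J.card = p + 1 ∧ (∃ i ∈ J, (i : ℕ) = maxIdx n ℓ) ∧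
    ∑ j ∈ J, ℓ j = ∑ j ∈ Jᶜ, ℓ j}

/-- The `p`-th Betti number of the planar polygon space:
`b_p(ℓ) = a_p(ℓ) + ã_p(ℓ) + a_{n-3-p}(ℓ)`. -/
def bPlanar (n p : ℕ) (ℓ : Fin n → ℝ) : ℕ :=
  aCount n p ℓ + medCount n p ℓ + aCount n (n - 3 - p) ℓ

/-- `â_p(ℓ)`: the number of short subsets of cardinality `p+1` containing the last index. -/
def hatACount (n p : ℕ) (ℓ : Fin n → ℝ) : ℕ :=
  Nat.card {J : Finset (Fin n) //
    J.card = p + 1 ∧ (∃ i ∈ J, (i : ℕ) = n - 1) ∧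
    ∑ j ∈ J, ℓ j < ∑ j ∈ Jᶜ, ℓ j}

/-- The `2p`-th Betti number of the spatial polygon space:
`b_{2p}(ℓ) = ∑_{j=0}^p (â_j(ℓ) - â_{n-j-2}(ℓ))`. -/
def bSpatial (n p : ℕ) (ℓ : Fin n → ℝ) : ℝ :=
  ∑ j ∈ Finset.range (p + 1), ((hatACount n j ℓ : ℝ) - (hatACount n (n - j - 2) ℓ : ℝ))

/-- The Poincaré polynomial of the planar polygon space `M_ℓ`. -/
def poincareM (n : ℕ) (t : ℝ) (ℓ : Fin n → ℝ) : ℝ :=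
  ∑ p ∈ Finset.range (n - 2), (bPlanar n p ℓ : ℝ) * t ^ p

/-- The Poincaré polynomial of the spatial polygon space `N_ℓ`. -/
def poincareN (n : ℕ) (t : ℝ) (ℓ : Fin n → ℝ) : ℝ :=
  ∑ p ∈ Finset.range (n - 2), bSpatial n p ℓ * t ^ (2 * p)

/-- The stopping time `τ_σ(ℓ)`, for `σ` a permutation of `{1, …, n-1}`. -/
def tauPerm (n : ℕ) (σ : Equiv.Perm (Fin (n - 1))) (ℓ : Fin n → ℝ) : ℕ :=
  sInf {t : ℕ |
    0 ≤ coord n ℓ (n - 1) + ∑ i : Fin (n - 1),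
      (if (i : ℕ) < t then coord n ℓ ((σ i : ℕ)) else - coord n ℓ ((σ i : ℕ)))}

/-- `ℓ̃`: the vector obtained from `ℓ` by exchanging the coordinates at positions `i₀`
(the minimal index of a maximal coordinate) and `n`. -/
def tildeVec (n : ℕ) (ℓ : Fin n → ℝ) : Fin n → ℝ := fun j =>
  if (j : ℕ) = maxIdx n ℓ then coord n ℓ (n - 1)
  else if (j : ℕ) = n - 1 then coord n ℓ (maxIdx n ℓ)
  else ℓ j

/-- `τ(ℓ) = τ_id(ℓ)`. -/
def tau (n : ℕ) (ℓ : Fin n → ℝ) : ℕ := tauPerm n (Equiv.refl _) ℓ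

/-- `τ̃(ℓ) = τ_id(ℓ̃)`. -/
def tauTilde (n : ℕ) (ℓ : Fin n → ℝ) : ℕ := tau n (tildeVec n ℓ)

open ProbabilityTheory Topology
open scoped ENNReal

/-! A deviation `τ ≥ (1/2 + δ) n`, resp. `τ ≤ (1/2 - δ) n`, forces the stopping condition to
fail, resp. hold, at a deterministic time `t`; since the condition compares the sum of the lengths
over `J = {1, …, t, n}` with that over `Jᶜ`, in both cases some fixed `J` with `|J| - |Jᶜ| ≥ δ n`
has `∑_J l ≤ ∑_{Jᶜ} l`. By Chernoff's bound and independence this has probability at most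
`M(-s)^|J| M(s)^|Jᶜ|`, where `M` is the moment generating function of `μ`; as
`M(±s) = e^{±s m + o(s)}` with mean `m > 0`, a small `s > 0` makes this `e^{-c n}`. Finally `ℓ̃` is
`ℓ` composed with one of `n` transpositions, each preserving `μ_n`, so the bound for `τ̃` costs only
a factor `n`. -/

theorem integrable_exp_mul_of_nonpos {μ : Measure ℝ} [IsFiniteMeasure μ]
    (hnonneg : ∀ᵐ x ∂μ, 0 ≤ x) {t : ℝ} (ht : t ≤ 0) : Integrable (fun x => Real.exp (t * x)) μ := by
  refine Integrable.of_mem_Icc 0 1 (by fun_prop) ?_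
  filter_upwards [hnonneg] with x hx
  exact ⟨(Real.exp_pos _).le, Real.exp_le_one_iff.2 (mul_nonpos_of_nonpos_of_nonneg ht hx)⟩

theorem zero_mem_interior_integrableExpSet_id {μ : Measure ℝ} [IsFiniteMeasure μ]
    (hnonneg : ∀ᵐ x ∂μ, 0 ≤ x) {η : ℝ} (hη : 0 < η)
    (hint : Integrable (fun x => Real.exp (η * x)) μ) :
    0 ∈ interior (integrableExpSet id μ) := by
  refine mem_interior_iff_mem_nhds.2 (Filter.mem_of_superset (Iio_mem_nhds hη) fun t ht => ?_)
  rcases le_total t 0 with h | h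
  · exact integrable_exp_mul_of_nonpos hnonneg h
  · exact integrable_exp_mul_of_nonneg_of_le hint h (le_of_lt ht)

theorem integral_id_pos {μ : Measure ℝ} [IsProbabilityMeasure μ] (hpos : ∀ᵐ x ∂μ, 0 < x)
    (hint : Integrable id μ) : 0 < ∫ x, x ∂μ := by
  refine (integral_pos_iff_support_of_nonneg_ae (hpos.mono fun x hx => hx.le) hint).2 ?_
  refine pos_iff_ne_zero.2 fun h => ?_
  obtain ⟨x, hx, hx0⟩ := (hpos.and (ae_iff.2 h)).exists
  simp_all

theorem eventually_mgf_le_exp {Ω : Type*} {mΩ : MeasurableSpace Ω} {μ : Measure Ω}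
    [IsProbabilityMeasure μ] {X : Ω → ℝ} (h0 : 0 ∈ interior (integrableExpSet X μ))
    {κ : ℝ} (hκ : 0 < κ) :
    ∀ᶠ t in 𝓝 0, mgf X μ t ≤ Real.exp (t * μ[X] + κ * |t|) := by
  have hderiv : HasDerivAt (mgf X μ) μ[X] 0 := by simpa using hasDerivAt_mgf h0
  filter_upwards [hderiv.isLittleO.def hκ] with t ht
  simp only [mgf_zero, sub_zero, smul_eq_mul, Real.norm_eq_abs] at ht
  calc mgf X μ t ≤ t * μ[X] + κ * |t| + 1 := by linarith [le_abs_self (mgf X μ t - 1 - t * μ[X])]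
    _ ≤ _ := Real.add_one_le_exp _

theorem pi_sum_le_sum_compl_le {ι : Type*} [Fintype ι] [DecidableEq ι] (μ : Measure ℝ)
    [IsFiniteMeasure μ] (J : Finset ι) {s : ℝ} (hs : 0 ≤ s)
    (hint : Integrable (fun x => Real.exp (s * x)) μ)
    (hint' : Integrable (fun x => Real.exp (-s * x)) μ) :
    Measure.pi (fun _ : ι => μ) {ℓ | ∑ j ∈ J, ℓ j ≤ ∑ j ∈ Jᶜ, ℓ j} ≤
      ENNReal.ofReal (mgf id μ (-s) ^ #J * mgf id μ s ^ #Jᶜ) := by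
  set w : ι → ℝ := fun j => if j ∈ J then -s else s
  have hexp_sum (ℓ : ι → ℝ) : Real.exp (s * (∑ j ∈ Jᶜ, ℓ j - ∑ j ∈ J, ℓ j)) =
      ∏ j, Real.exp (w j * ℓ j) := by
    rw [← Real.exp_sum, ← Finset.sum_add_sum_compl J,
      Finset.sum_congr rfl fun j hj => show w j * ℓ j = -s * ℓ j by simp [w, hj],
      Finset.sum_congr rfl fun j hj => show w j * ℓ j = s * ℓ j by simp_all [w],
      ← Finset.mul_sum, ← Finset.mul_sum]
    ring_nf
  have hint_pi : Integrable (fun ℓ : ι → ℝ => Real.exp (s * (∑ j ∈ Jᶜ, ℓ j - ∑ j ∈ J, ℓ j)))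
      (Measure.pi fun _ => μ) := by
    simp_rw [hexp_sum]
    refine Integrable.fintype_prod (f := fun j x => Real.exp (w j * x)) (μ := fun _ => μ)
      fun j => ?_
    by_cases hj : j ∈ J
    · simpa [w, hj] using hint'
    · simpa [w, hj] using hint
  have hmgf : mgf (fun ℓ : ι → ℝ => ∑ j ∈ Jᶜ, ℓ j - ∑ j ∈ J, ℓ j) (Measure.pi fun _ => μ) s =
      mgf id μ (-s) ^ #J * mgf id μ s ^ #Jᶜ := by
    rw [mgf]
    simp_rw [hexp_sum]
    rw [integral_fintype_prod_eq_prod (fun j x => Real.exp (w j * x)),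
      ← Finset.prod_mul_prod_compl J,
      Finset.prod_congr rfl fun j hj => show ∫ x, Real.exp (w j * x) ∂μ = mgf id μ (-s) by
        simp [w, hj, mgf],
      Finset.prod_congr rfl fun j hj => show ∫ x, Real.exp (w j * x) ∂μ = mgf id μ s by
        simp_all [w, mgf], Finset.prod_const, Finset.prod_const]
  have hchernoff := measure_ge_le_exp_mul_mgf 0 hs hint_pi
  rw [mul_zero, Real.exp_zero, one_mul, hmgf] at hchernoff
  simp_rw [sub_nonneg] at hchernoff
  rw [← ofReal_measureReal]
  exact ENNReal.ofReal_le_ofReal hchernoff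

theorem card_add_card_compl_fin {n : ℕ} (J : Finset (Fin n)) : (#J : ℝ) + #Jᶜ = n := by
  exact_mod_cast (Finset.card_add_card_compl J).trans (Fintype.card_fin n)

theorem exists_pmeas_sum_le_sum_compl_le (μ : Measure ℝ) [IsProbabilityMeasure μ]
    (h0 : 0 ∈ interior (integrableExpSet id μ)) (hm : 0 < ∫ x, x ∂μ) {δ : ℝ} (hδ : 0 < δ) :
    ∃ c > 0, ∀ (n : ℕ) (J : Finset (Fin n)), δ * n ≤ (#J : ℝ) - #Jᶜ →
      pmeas μ n {ℓ | ∑ j ∈ J, ℓ j ≤ ∑ j ∈ Jᶜ, ℓ j} ≤ ENNReal.ofReal (Real.exp (-c * n)) := by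
  set m := ∫ x, x ∂μ
  -- The `o(t)` slack `m δ / 2` absorbs half of the drift `m δ`, leaving the rate `s m δ / 2`.
  have hκ : 0 < m * δ / 2 := by positivity
  have hev : ∀ᶠ t in 𝓝 0, Integrable (fun x => Real.exp (t * x)) μ ∧
      mgf id μ t ≤ Real.exp (t * m + m * δ / 2 * |t|) := by
    filter_upwards [mem_interior_iff_mem_nhds.1 h0, eventually_mgf_le_exp h0 hκ] with t ht hmgf
    exact ⟨ht, by simpa using hmgf⟩
  obtain ⟨r, hr, hball⟩ := Metric.eventually_nhds_iff.1 hev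
  have hs : 0 < r / 2 := half_pos hr
  obtain ⟨hint, hmgf⟩ := hball (y := r / 2)
    (by rw [Real.dist_eq, sub_zero, abs_of_pos hs]; linarith)
  obtain ⟨hint', hmgf'⟩ := hball (y := -(r / 2))
    (by rw [Real.dist_eq, sub_zero, abs_neg, abs_of_pos hs]; linarith)
  set s := r / 2
  refine ⟨s * m * δ / 2, by positivity, fun n J hJ => ?_⟩
  refine (pi_sum_le_sum_compl_le μ J hs.le hint (by simpa using hint')).trans
    (ENNReal.ofReal_le_ofReal ?_)
  rw [abs_neg, abs_of_pos hs] at hmgf'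
  rw [abs_of_pos hs] at hmgf
  calc mgf id μ (-s) ^ #J * mgf id μ s ^ #Jᶜ
      ≤ Real.exp (-s * m + m * δ / 2 * s) ^ #J * Real.exp (s * m + m * δ / 2 * s) ^ #Jᶜ := by
        gcongr ?_ ^ _ * ?_ ^ _
        all_goals first | exact pow_nonneg mgf_nonneg _ | exact mgf_nonneg
    _ = Real.exp (#J * (-s * m + m * δ / 2 * s) + #Jᶜ * (s * m + m * δ / 2 * s)) := by
        rw [← Real.exp_nat_mul, ← Real.exp_nat_mul, ← Real.exp_add]
    _ ≤ Real.exp (-(s * m * δ / 2) * n) := by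
        gcongr
        linear_combination (s * m) * hJ + (m * δ / 2 * s) * card_add_card_compl_fin J

-- `{1, …, t, n}` in the paper's 1-based indexing.
def headSet (n t : ℕ) : Finset (Fin n) := univ.filter fun j => (j : ℕ) < t ∨ (j : ℕ) = n - 1

theorem coord_add_sum_ite_eq_sum_headSet_sub (n t : ℕ) (ℓ : Fin n → ℝ) :
    coord n ℓ (n - 1) + ∑ i : Fin (n - 1), (if (i : ℕ) < t then coord n ℓ i else -coord n ℓ i) =
      ∑ j ∈ headSet n t, ℓ j - ∑ j ∈ (headSet n t)ᶜ, ℓ j := by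
  rcases n with _ | m
  · simp [coord, Finset.eq_empty_of_isEmpty]
  rw [headSet, Finset.compl_filter, Finset.sum_filter, Finset.sum_filter, ← Finset.sum_sub_distrib,
    Fin.sum_univ_castSucc]
  simp only [coord, add_tsub_cancel_right, lt_add_iff_pos_right, Order.lt_one_iff, ↓reduceDIte,
    Nat.add_one_sub_one, Order.lt_add_one_iff, Fin.is_le', Fin.val_castSucc, not_or, not_lt,
    Fin.val_last, or_true, ↓reduceIte, not_true_eq_false, sub_zero]
  rw [add_comm]
  refine congrArg₂ (· + ·) (Finset.sum_congr rfl fun i _ => ?_) rfl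
  have := i.isLt
  split_ifs <;> first | omega | (simp only [sub_zero, zero_sub]; rfl)

theorem headSet_mono (n : ℕ) {t t' : ℕ} (h : t ≤ t') : headSet n t ⊆ headSet n t' := by
  intro j
  simp only [headSet, Finset.mem_filter, Finset.mem_univ, true_and]
  omega

theorem headSet_sub_one (n : ℕ) : headSet n (n - 1) = univ := by
  ext j
  simp only [headSet, Finset.mem_filter, Finset.mem_univ, true_and, iff_true]
  omega

theorem card_headSet {n t : ℕ} (h : t < n) : #(headSet n t) = t + 1 := by
  rw [← Finset.card_map Fin.valEmbedding]
  have : (headSet n t).map Fin.valEmbedding = insert (n - 1) (range t) := by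
    ext a
    simp only [headSet, Finset.mem_map, Finset.mem_filter, Finset.mem_univ, true_and,
      Fin.valEmbedding_apply, Finset.mem_insert, Finset.mem_range]
    constructor
    · rintro ⟨j, hj, rfl⟩; omega
    · intro ha; exact ⟨⟨a, by omega⟩, by simpa [or_comm] using ha, rfl⟩
  rw [this, Finset.card_insert_of_notMem (by simp; omega), Finset.card_range]

theorem sum_sub_sum_compl_mono {ι : Type*} [Fintype ι] [DecidableEq ι] {ℓ : ι → ℝ}
    (hℓ : ∀ j, 0 ≤ ℓ j) {J K : Finset ι} (h : J ⊆ K) :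
    ∑ j ∈ J, ℓ j - ∑ j ∈ Jᶜ, ℓ j ≤ ∑ j ∈ K, ℓ j - ∑ j ∈ Kᶜ, ℓ j := by
  have hJK := Finset.sum_le_sum_of_subset_of_nonneg h fun j _ _ => hℓ j
  have hKJ := Finset.sum_le_sum_of_subset_of_nonneg (Finset.compl_subset_compl.2 h)
    fun j _ _ => hℓ j
  linarith

theorem tau_eq_sInf (n : ℕ) (ℓ : Fin n → ℝ) :
    tau n ℓ = sInf {t | ∑ j ∈ (headSet n t)ᶜ, ℓ j ≤ ∑ j ∈ headSet n t, ℓ j} := by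
  simp only [tau, tauPerm, Equiv.refl_apply, coord_add_sum_ite_eq_sum_headSet_sub, sub_nonneg]

theorem sum_lt_sum_compl_of_lt_tau {n t : ℕ} {ℓ : Fin n → ℝ} (h : t < tau n ℓ) :
    ∑ j ∈ headSet n t, ℓ j < ∑ j ∈ (headSet n t)ᶜ, ℓ j := by
  rw [tau_eq_sInf] at h
  exact not_le.1 (Nat.notMem_of_lt_sInf h)

theorem sum_compl_le_sum_of_tau_le {n t : ℕ} {ℓ : Fin n → ℝ} (hℓ : ∀ j, 0 ≤ ℓ j)
    (h : tau n ℓ ≤ t) : ∑ j ∈ (headSet n t)ᶜ, ℓ j ≤ ∑ j ∈ headSet n t, ℓ j := by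
  have hstop : tau n ℓ ∈ {t | ∑ j ∈ (headSet n t)ᶜ, ℓ j ≤ ∑ j ∈ headSet n t, ℓ j} := by
    rw [tau_eq_sInf]
    refine Nat.sInf_mem ⟨n - 1, ?_⟩
    simpa [headSet_sub_one] using Finset.sum_nonneg fun j _ => hℓ j
  linarith [hstop.out, sum_sub_sum_compl_mono hℓ (headSet_mono n h)]

theorem exists_upper_deviation_set {n : ℕ} {δ : ℝ} (hn : 0 < n) (hδ : 0 < δ) (hδ' : δ ≤ 1 / 2) :
    ∃ J : Finset (Fin n), 2 * δ * n ≤ (#J : ℝ) - #Jᶜ ∧ ∀ ℓ : Fin n → ℝ,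
      (1 / 2 + δ) * n ≤ tau n ℓ → ∑ j ∈ J, ℓ j ≤ ∑ j ∈ Jᶜ, ℓ j := by
  set k := ⌈(1 / 2 + δ) * n⌉₊
  have hk : 0 < k := Nat.ceil_pos.2 (by positivity)
  have hkn : k ≤ n := Nat.ceil_le.2 (by nlinarith)
  refine ⟨headSet n (k - 1), ?_, fun ℓ hτ => (sum_lt_sum_compl_of_lt_tau ?_).le⟩
  · have hcard : (#(headSet n (k - 1)) : ℝ) = k := by
      rw [card_headSet (by omega), Nat.sub_add_cancel hk]
    linarith [card_add_card_compl_fin (headSet n (k - 1)), Nat.le_ceil ((1 / 2 + δ) * n)]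
  · have := Nat.ceil_le.2 hτ
    omega

theorem exists_lower_deviation_set {n : ℕ} {δ : ℝ} (hn : 0 < n) (hδ : 0 < δ) (hδ' : δ ≤ 1 / 2) :
    ∃ J : Finset (Fin n), 2 * δ * n - 2 ≤ (#J : ℝ) - #Jᶜ ∧ ∀ ℓ : Fin n → ℝ, (∀ j, 0 ≤ ℓ j) →
      tau n ℓ ≤ (1 / 2 - δ) * n → ∑ j ∈ J, ℓ j ≤ ∑ j ∈ Jᶜ, ℓ j := by
  set k := ⌊(1 / 2 - δ) * n⌋₊
  have hk : (k : ℝ) ≤ (1 / 2 - δ) * n := Nat.floor_le (by nlinarith)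
  have hkn : k < n := by
    have : (k : ℝ) < n := by nlinarith [(Nat.cast_pos.2 hn : (0 : ℝ) < n)]
    exact_mod_cast this
  refine ⟨(headSet n k)ᶜ, ?_, fun ℓ hℓ hτ => ?_⟩
  · have hcard : (#(headSet n k) : ℝ) = k + 1 := by rw [card_headSet hkn]; push_cast; ring
    rw [compl_compl]
    linarith [card_add_card_compl_fin (headSet n k)]
  · rw [compl_compl]
    exact sum_compl_le_sum_of_tau_le hℓ (Nat.le_floor hτ)

theorem pmeas_tau_deviation_le {μ : Measure ℝ} [IsProbabilityMeasure μ]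
    (hnonneg : ∀ᵐ x ∂μ, 0 ≤ x) {n : ℕ} {δ : ℝ} (hδ : 0 < δ) (hδ' : δ ≤ 1 / 2) (hn : 2 ≤ δ * n)
    {r : ℝ≥0∞}
    (hrate : ∀ J : Finset (Fin n), δ * n ≤ (#J : ℝ) - #Jᶜ →
      pmeas μ n {ℓ | ∑ j ∈ J, ℓ j ≤ ∑ j ∈ Jᶜ, ℓ j} ≤ r) :
    pmeas μ n {ℓ | δ ≤ |(tau n ℓ : ℝ) / n - 1 / 2|} ≤ 2 * r := by
  have hn0 : (0 : ℝ) < n := by nlinarith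
  obtain ⟨J₁, hJ₁, hup⟩ := exists_upper_deviation_set (Nat.cast_pos.1 hn0) hδ hδ'
  obtain ⟨J₂, hJ₂, hlow⟩ := exists_lower_deviation_set (Nat.cast_pos.1 hn0) hδ hδ'
  have hae : ∀ᵐ ℓ ∂pmeas μ n, ∀ j, 0 ≤ ℓ j :=
    ae_all_iff.2 fun j => Measure.tendsto_eval_ae_ae.eventually hnonneg
  calc pmeas μ n {ℓ | δ ≤ |(tau n ℓ : ℝ) / n - 1 / 2|}
      ≤ pmeas μ n ({ℓ | ∑ j ∈ J₁, ℓ j ≤ ∑ j ∈ J₁ᶜ, ℓ j} ∪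
          {ℓ | ∑ j ∈ J₂, ℓ j ≤ ∑ j ∈ J₂ᶜ, ℓ j}) := by
        refine measure_mono_ae (hae.mono fun ℓ hℓ hdev => ?_)
        rcases le_abs'.1 hdev with h | h
        · exact Or.inr (hlow ℓ hℓ (by rw [← div_le_iff₀ hn0]; linarith))
        · exact Or.inl (hup ℓ (by rw [← le_div_iff₀ hn0]; linarith))
    _ ≤ r + r := (measure_union_le _ _).trans (add_le_add (hrate J₁ (by nlinarith))
        (hrate J₂ (by nlinarith)))
    _ = 2 * r := (two_mul r).symm

theorem eventually_tau_deviation_le {μ : Measure ℝ} [IsProbabilityMeasure μ]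
    (hnonneg : ∀ᵐ x ∂μ, 0 ≤ x) (h0 : 0 ∈ interior (integrableExpSet id μ))
    (hm : 0 < ∫ x, x ∂μ) {ε : ℝ} (hε : 0 < ε) :
    ∃ c > 0, ∀ᶠ n : ℕ in atTop,
      pmeas μ n {ℓ | ε ≤ |(tau n ℓ : ℝ) / n - 1 / 2|} ≤ 2 * ENNReal.ofReal (Real.exp (-c * n)) := by
  set δ := min ε (1 / 2)
  have hδ : 0 < δ := lt_min hε one_half_pos
  obtain ⟨c, hc, hrate⟩ := exists_pmeas_sum_le_sum_compl_le μ h0 hm hδ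
  refine ⟨c, hc, ?_⟩
  filter_upwards [tendsto_natCast_atTop_atTop.eventually_ge_atTop (2 / δ)] with n hn
  have hsub : {ℓ : Fin n → ℝ | ε ≤ |(tau n ℓ : ℝ) / n - 1 / 2|} ⊆
      {ℓ | δ ≤ |(tau n ℓ : ℝ) / n - 1 / 2|} :=
    Set.ofPred_subset_ofPred.2 fun ℓ => (min_le_left _ _).trans
  exact (measure_mono hsub).trans (pmeas_tau_deviation_le hnonneg hδ (min_le_right _ _)
    ((div_le_iff₀' hδ).1 hn) (hrate n))

theorem maxIdx_lt {n : ℕ} (hn : 0 < n) (ℓ : Fin n → ℝ) : maxIdx n ℓ < n := by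
  have : Nonempty (Fin n) := ⟨⟨0, hn⟩⟩
  obtain ⟨i, hi⟩ := Finite.exists_max ℓ
  exact (Nat.sInf_mem (s := {i : ℕ | ∃ h : i < n, ∀ j : Fin n, ℓ j ≤ ℓ ⟨i, h⟩})
    ⟨i, i.isLt, hi⟩).1

theorem tildeVec_eq_comp_swap {n : ℕ} (hn : 0 < n) (ℓ : Fin n → ℝ) :
    tildeVec n ℓ = ℓ ∘ Equiv.swap ⟨maxIdx n ℓ, maxIdx_lt hn ℓ⟩ ⟨n - 1, by omega⟩ := by
  funext j
  simp only [tildeVec, Function.comp_apply, coord, maxIdx_lt hn ℓ, Nat.sub_lt hn one_pos,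
    dite_true]
  split_ifs with h₁ h₂
  · obtain rfl : j = ⟨maxIdx n ℓ, maxIdx_lt hn ℓ⟩ := Fin.ext h₁
    rw [Equiv.swap_apply_left]
  · obtain rfl : j = ⟨n - 1, Nat.sub_lt hn one_pos⟩ := Fin.ext h₂
    rw [Equiv.swap_apply_right]
  · rw [Equiv.swap_apply_of_ne_of_ne (fun h => h₁ (by rw [h])) (fun h => h₂ (by rw [h]))]

theorem pi_preimage_comp_perm {ι : Type*} [Fintype ι] (μ : Measure ℝ) [SigmaFinite μ]
    (σ : Equiv.Perm ι) (S : Set (ι → ℝ)) :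
    Measure.pi (fun _ : ι => μ) ((· ∘ σ) ⁻¹' S) = Measure.pi (fun _ : ι => μ) S :=
  (measurePreserving_arrowCongr' (fun _ => μ) (fun _ => μ) σ.symm (MeasurableEquiv.refl ℝ)
    fun _ => MeasurePreserving.id μ).measure_preimage_equiv S

theorem pmeas_tauTilde_mem_le (μ : Measure ℝ) [SigmaFinite μ] {n : ℕ} (hn : 0 < n) (T : Set ℕ) :
    pmeas μ n {ℓ | tauTilde n ℓ ∈ T} ≤ n * pmeas μ n {ℓ | tau n ℓ ∈ T} := by
  have hsub : {ℓ | tauTilde n ℓ ∈ T} ⊆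
      ⋃ i : Fin n, (· ∘ Equiv.swap i ⟨n - 1, by omega⟩) ⁻¹' {ℓ | tau n ℓ ∈ T} := fun ℓ hℓ =>
    Set.mem_iUnion.2 ⟨_, by simpa [tauTilde, tildeVec_eq_comp_swap hn] using hℓ⟩
  calc pmeas μ n {ℓ | tauTilde n ℓ ∈ T}
      ≤ ∑ i : Fin n, pmeas μ n ((· ∘ Equiv.swap i ⟨n - 1, by omega⟩) ⁻¹' {ℓ | tau n ℓ ∈ T}) :=
        (measure_mono hsub).trans (measure_iUnion_fintype_le _ _)
    _ = n * pmeas μ n {ℓ | tau n ℓ ∈ T} := by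
        simp only [pmeas, pi_preimage_comp_perm, Finset.sum_const, Finset.card_univ,
          Fintype.card_fin, nsmul_eq_mul]

theorem exists_exp_bound_of_eventually_le {p : ℕ → ℝ≥0∞} {c : ℝ} (hc : 0 < c)
    (h : ∀ᶠ n : ℕ in atTop, p n ≤ n * (2 * ENNReal.ofReal (Real.exp (-c * n)))) :
    ∃ c' > (0 : ℝ), ∃ N : ℕ, ∀ n ≥ N, p n ≤ ENNReal.ofReal (Real.exp (-c' * n)) := by
  have hlin : ∀ᶠ x : ℝ in atTop, x ≤ 1 / 2 * Real.exp (c / 2 * x) := by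
    filter_upwards [(isLittleO_pow_exp_pos_mul_atTop 1 (half_pos hc)).def one_half_pos,
      eventually_ge_atTop 0] with x hx hx0
    simpa [abs_of_nonneg hx0] using hx
  obtain ⟨N, hN⟩ := eventually_atTop.1 (h.and (tendsto_natCast_atTop_atTop.eventually hlin))
  refine ⟨c / 2, half_pos hc, N, fun n hn => (hN n hn).1.trans ?_⟩
  have hreal : n * (2 * Real.exp (-c * n)) ≤ Real.exp (-(c / 2) * n) := by
    have hsplit : Real.exp (-c * n) = Real.exp (-(c / 2) * n) * Real.exp (-(c / 2) * n) := by
      rw [← Real.exp_add]; ring_nf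
    have hexp : Real.exp (c / 2 * n) * Real.exp (-(c / 2) * n) = 1 := by
      rw [← Real.exp_add]; ring_nf; exact Real.exp_zero
    nlinarith [(hN n hn).2, Real.exp_pos (-(c / 2) * n)]
  calc (n : ℝ≥0∞) * (2 * ENNReal.ofReal (Real.exp (-c * n)))
      = ENNReal.ofReal (n * (2 * Real.exp (-c * n))) := by
        rw [ENNReal.ofReal_mul (by positivity), ENNReal.ofReal_mul (by positivity),
          ENNReal.ofReal_natCast, ENNReal.ofReal_ofNat]
    _ ≤ ENNReal.ofReal (Real.exp (-(c / 2) * n)) := ENNReal.ofReal_le_ofReal hreal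

theorem stmt19_general (μ : MeasureTheory.Measure ℝ) [IsProbabilityMeasure μ]
    (hsupp : μ (Set.Ioi (0 : ℝ))ᶜ = 0)
    (hexp : ∃ η > 0, Integrable (fun x => Real.exp (η * x)) μ)
    (ε : ℝ) (hε : 0 < ε) :
    (∃ c > (0 : ℝ), ∃ N : ℕ, ∀ n ≥ N,
      pmeas μ n {ℓ | ε ≤ |(tau n ℓ : ℝ) / n - 1 / 2|} ≤
        ENNReal.ofReal (Real.exp (-c * n))) ∧
    (∃ c > (0 : ℝ), ∃ N : ℕ, ∀ n ≥ N,
      pmeas μ n {ℓ | ε ≤ |(tauTilde n ℓ : ℝ) / n - 1 / 2|} ≤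
        ENNReal.ofReal (Real.exp (-c * n))) := by
  obtain ⟨η, hη, hηint⟩ := hexp
  have hpos : ∀ᵐ x ∂μ, 0 < x := ae_iff.2 hsupp
  have hnonneg : ∀ᵐ x ∂μ, 0 ≤ x := hpos.mono fun _ => le_of_lt
  have h0 := zero_mem_interior_integrableExpSet_id hnonneg hη hηint
  obtain ⟨c, hc, hτ⟩ := eventually_tau_deviation_le hnonneg h0
    (integral_id_pos hpos (integrable_of_mem_interior_integrableExpSet h0)) hε
  refine ⟨exists_exp_bound_of_eventually_le hc ?_, exists_exp_bound_of_eventually_le hc ?_⟩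
  · filter_upwards [hτ, eventually_ge_atTop 1] with n h hn
    exact h.trans (le_mul_of_one_le_left' (by exact_mod_cast hn))
  · filter_upwards [hτ, eventually_gt_atTop 0] with n h hn
    exact (pmeas_tauTilde_mem_le μ hn {k | ε ≤ |(k : ℝ) / n - 1 / 2|}).trans
      (by gcongr; exact h)

/-- Large deviations estimate for the stopping time: for every `ε > 0`
there exist `c > 0` and `N` such that `μ_n(|n⁻¹τ(ℓ) - 1/2| ≥ ε) ≤ e^{-cn}` for `n ≥ N`;
the same holds for `τ̃`. -/
theorem stmt19 (μ : MeasureTheory.Measure ℝ) [IsProbabilityMeasure μ] [NullSingletonClass μ]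
    (hsupp : μ (Set.Ioi (0 : ℝ))ᶜ = 0)
    (hexp : ∃ η > 0, Integrable (fun x => Real.exp (η * x)) μ)
    (ε : ℝ) (hε : 0 < ε) :
    (∃ c > (0 : ℝ), ∃ N : ℕ, ∀ n ≥ N,
      pmeas μ n {ℓ | ε ≤ |(tau n ℓ : ℝ) / n - 1 / 2|} ≤
        ENNReal.ofReal (Real.exp (-c * n))) ∧
    (∃ c > (0 : ℝ), ∃ N : ℕ, ∀ n ≥ N,
      pmeas μ n {ℓ | ε ≤ |(tauTilde n ℓ : ℝ) / n - 1 / 2|} ≤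
        ENNReal.ofReal (Real.exp (-c * n))) :=
  stmt19_general μ hsupp hexp ε hε
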